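/- Let k₁, k₂ ∈ (0,1) with k₁ ≠ k₂ and let φ be the rational self-map of ℙ¹(ℂ)×ℙ¹(ℂ) defined by φ([u₀:u₁],[v₀:v₁]) = ([u₀v₀+u₁v₁ : u₁v₀−u₀v₁], [−v₀:v₁]). Then: (i) φ is defined exactly away from the two points p = ([1:i],[1:i]) and σ₀(p) = ([1:−i],[1:−i]) (these are precisely the points where both u₀v₀+u₁v₁ and u₁v₀−u₀v₁ vanish); (ii) φ∘φ is the identity at every point ([u₀:u₁],[v₀:v₁]) with v₀²+v₁² ≠ 0; and (iii) φ maps q = ([1:k₁i],[1:k₂i]) to σ₀(q) = ([1:−k₁i],[1:−k₂i]) if and only if k₁²k₂ − 2k₁ + k₂ = 0. -/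

import Mathlib

/-!
Writing `(F15 (u, v)).1 = (A, B)`, one has `A + iB = (u₀ + iu₁)(v₀ − iv₁)` and
`A − iB = (u₀ − iu₁)(v₀ + iv₁)`. A nonzero vector never has both isotropic coordinates
`w₀ ± iw₁` zero, so both products vanish only when `u₀ + iu₁ = v₀ + iv₁ = 0` (the point `p`) or
`u₀ − iu₁ = v₀ − iv₁ = 0` (the point `σ₀(p)`). Applying `F15` twice multiplies `u` by
`−(v₀² + v₁²)` and fixes `v`. At `q = ([1 : a], [1 : b])` the image is
`([1 + ab : a − b], [−1 : b])`, which is `([1 : −a], [1 : −b])` iff `a − b = −a(1 + ab)`; for `a = k₁i`, `b = k₂i` this is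
`k₁²k₂ − 2k₁ + k₂ = 0`, and `1 + ab = 1 − k₁k₂ ≠ 0` keeps the image defined.
-/

noncomputable section

open ComplexConjugate

/-- The projective line `ℙ¹(K)` over a field `K`, i.e. the projectivization of `K²`. -/
abbrev Pone (K : Type) [Field K] : Type := Projectivization K (Fin 2 → K)

theorem vec_ne_zero {K : Type} [Field K] {a b : K} (h : a ≠ 0 ∨ b ≠ 0) :
    (![a, b] : Fin 2 → K) ≠ 0 := by
  intro hv
  rcases h with h | h
  · exact h (by simpa using congrFun hv 0)
  · exact h (by simpa using congrFun hv 1)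

/-- The point `[a : b]` of the projective line `ℙ¹(K)`. -/
def pt {K : Type} [Field K] (a b : K) (h : a ≠ 0 ∨ b ≠ 0) : Pone K :=
  Projectivization.mk K ![a, b] (vec_ne_zero h)

/-- The point `[1 : b]` of `ℙ¹(ℂ)`. -/
def Pb (b : ℂ) : Pone ℂ := pt 1 b (Or.inl one_ne_zero)

/-- The vector-level formula of the rational self-map
`φ([u₀:u₁],[v₀:v₁]) = ([u₀v₀ + u₁v₁ : u₁v₀ − u₀v₁], [−v₀ : v₁])` of `ℙ¹(ℂ) × ℙ¹(ℂ)`. -/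
def F15 (w : (Fin 2 → ℂ) × (Fin 2 → ℂ)) : (Fin 2 → ℂ) × (Fin 2 → ℂ) :=
  (![w.1 0 * w.2 0 + w.1 1 * w.2 1, w.1 1 * w.2 0 - w.1 0 * w.2 1],
   ![-(w.2 0), w.2 1])

open Complex

theorem mk_eq_pt_one_iff {K : Type} [Field K] {u : Fin 2 → K} (hu : u ≠ 0) (b : K) :
    Projectivization.mk K u hu = pt 1 b (Or.inl one_ne_zero) ↔ u 1 = u 0 * b := by
  rw [pt, Projectivization.mk_eq_mk_iff']
  constructor
  · rintro ⟨a, rfl⟩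
    simp
  · intro h
    refine ⟨u 0, ?_⟩
    ext i
    fin_cases i <;> simp [h]

theorem mk_eq_Pb_I_iff {u : Fin 2 → ℂ} (hu : u ≠ 0) :
    Projectivization.mk ℂ u hu = Pb I ↔ u 0 + I * u 1 = 0 := by
  refine (mk_eq_pt_one_iff hu I).trans ⟨fun h => ?_, fun h => ?_⟩
  · linear_combination I * h + u 0 * I_sq
  · linear_combination -I * h + u 1 * I_sq

theorem mk_eq_Pb_neg_I_iff {u : Fin 2 → ℂ} (hu : u ≠ 0) :
    Projectivization.mk ℂ u hu = Pb (-I) ↔ u 0 - I * u 1 = 0 := by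
  refine (mk_eq_pt_one_iff hu (-I)).trans ⟨fun h => ?_, fun h => ?_⟩
  · linear_combination -I * h + u 0 * I_sq
  · linear_combination I * h + u 1 * I_sq

theorem isotropic_coords_ne_zero {u : Fin 2 → ℂ} (hu : u ≠ 0) :
    u 0 + I * u 1 ≠ 0 ∨ u 0 - I * u 1 ≠ 0 := by
  by_contra! h
  apply hu
  ext i
  fin_cases i
  · show u 0 = 0
    linear_combination (h.1 + h.2) / 2
  · show u 1 = 0
    linear_combination (h.2 - h.1) * I / 2 + u 1 * I_sq

theorem mul_eq_zero_and_mul_eq_zero_iff {M₀ : Type*} [MulZeroClass M₀] [NoZeroDivisors M₀]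
    {a b c d : M₀} (hab : a ≠ 0 ∨ b ≠ 0) (hcd : c ≠ 0 ∨ d ≠ 0) :
    a * d = 0 ∧ b * c = 0 ↔ a = 0 ∧ c = 0 ∨ b = 0 ∧ d = 0 := by
  simp only [mul_eq_zero]
  tauto

theorem F15_snd_ne_zero (u : Fin 2 → ℂ) {v : Fin 2 → ℂ} (hv : v ≠ 0) : (F15 (u, v)).2 ≠ 0 := by
  contrapose! hv
  ext i
  fin_cases i
  · simpa [F15] using congrFun hv 0
  · simpa [F15] using congrFun hv 1

theorem F15_fst_eq_zero_iff_isotropic (u v : Fin 2 → ℂ) :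
    (F15 (u, v)).1 = 0 ↔
      (u 0 + I * u 1) * (v 0 - I * v 1) = 0 ∧ (u 0 - I * u 1) * (v 0 + I * v 1) = 0 := by
  simp only [F15, Matrix.cons_eq_zero_iff, Matrix.zero_empty, and_true]
  constructor
  · rintro ⟨hA, hB⟩
    constructor
    · linear_combination hA + I * hB - u 1 * v 1 * I_sq
    · linear_combination hA - I * hB - u 1 * v 1 * I_sq
  · rintro ⟨hp, hm⟩
    constructor
    · linear_combination (hp + hm) / 2 + u 1 * v 1 * I_sq
    · linear_combination (hm - hp) * I / 2 + (u 1 * v 0 - u 0 * v 1) * I_sq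

theorem F15_fst_eq_zero_iff {u v : Fin 2 → ℂ} (hu : u ≠ 0) (hv : v ≠ 0) :
    (F15 (u, v)).1 = 0 ↔
      u 0 + I * u 1 = 0 ∧ v 0 + I * v 1 = 0 ∨ u 0 - I * u 1 = 0 ∧ v 0 - I * v 1 = 0 := by
  rw [F15_fst_eq_zero_iff_isotropic]
  exact mul_eq_zero_and_mul_eq_zero_iff (isotropic_coords_ne_zero hu)
    (isotropic_coords_ne_zero hv)

theorem F15_F15 (u v : Fin 2 → ℂ) : F15 (F15 (u, v)) = (-(v 0 ^ 2 + v 1 ^ 2) • u, v) := by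
  refine Prod.ext ?_ ?_ <;> ext i <;> fin_cases i <;> simp [F15] <;> ring

theorem F15_pt_one_eq_Pb_neg_iff (a b : ℂ) (hab : 1 + a * b ≠ 0) :
    (∃ (h1 : (F15 (![1, a], ![1, b])).1 ≠ 0) (h2 : (F15 (![1, a], ![1, b])).2 ≠ 0),
      (Projectivization.mk ℂ (F15 (![1, a], ![1, b])).1 h1,
       Projectivization.mk ℂ (F15 (![1, a], ![1, b])).2 h2) = (Pb (-a), Pb (-b))) ↔
    a ^ 2 * b + 2 * a - b = 0 := by
  have h1 : (F15 (![1, a], ![1, b])).1 ≠ 0 := fun h => hab (by simpa [F15] using congrFun h 0)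
  have h2 : (F15 (![1, a], ![1, b])).2 ≠ 0 := F15_snd_ne_zero _ (vec_ne_zero (Or.inl one_ne_zero))
  constructor
  · rintro ⟨h1, h2, h⟩
    have h' := (mk_eq_pt_one_iff h1 (-a)).1 (Prod.ext_iff.1 h).1
    simp only [F15, Matrix.cons_val_zero, Matrix.cons_val_one] at h'
    linear_combination h'
  · intro h
    refine ⟨h1, h2,
      Prod.ext ((mk_eq_pt_one_iff h1 (-a)).2 ?_) ((mk_eq_pt_one_iff h2 (-b)).2 ?_)⟩
    · simp only [F15, Matrix.cons_val_zero, Matrix.cons_val_one]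
      linear_combination h
    · simp [F15]

theorem statement15_general (k₁ k₂ : ℝ)
    (hk₁ : k₁ ∈ Set.Ioo (0 : ℝ) 1) (hk₂ : k₂ ∈ Set.Ioo (0 : ℝ) 1) :
    -- (i)
    (∀ (u v : Fin 2 → ℂ) (hu : u ≠ 0) (hv : v ≠ 0),
      (F15 (u, v)).2 ≠ 0 ∧
      ((F15 (u, v)).1 = 0 ↔
        ((Projectivization.mk ℂ u hu, Projectivization.mk ℂ v hv)
            = (Pb Complex.I, Pb Complex.I) ∨
          (Projectivization.mk ℂ u hu, Projectivization.mk ℂ v hv)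
            = (Pb (-Complex.I), Pb (-Complex.I))))) ∧
    -- (ii)
    (∀ u v : Fin 2 → ℂ, u ≠ 0 → v ≠ 0 → v 0 ^ 2 + v 1 ^ 2 ≠ 0 →
      ∃ c : ℂ, c ≠ 0 ∧ F15 (F15 (u, v)) = (c • u, v)) ∧
    -- (iii)
    ((∃ (h1 : (F15 (![1, (k₁ : ℂ) * Complex.I], ![1, (k₂ : ℂ) * Complex.I])).1 ≠ 0)
        (h2 : (F15 (![1, (k₁ : ℂ) * Complex.I], ![1, (k₂ : ℂ) * Complex.I])).2 ≠ 0),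
        (Projectivization.mk ℂ
            (F15 (![1, (k₁ : ℂ) * Complex.I], ![1, (k₂ : ℂ) * Complex.I])).1 h1,
         Projectivization.mk ℂ
            (F15 (![1, (k₁ : ℂ) * Complex.I], ![1, (k₂ : ℂ) * Complex.I])).2 h2)
          = (Pb (-((k₁ : ℂ) * Complex.I)), Pb (-((k₂ : ℂ) * Complex.I))))
      ↔ k₁ ^ 2 * k₂ - 2 * k₁ + k₂ = 0) := by
  refine ⟨fun u v hu hv => ⟨F15_snd_ne_zero u hv, ?_⟩,
    fun u v _ _ hv => ⟨_, neg_ne_zero.2 hv, F15_F15 u v⟩, ?_⟩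
  · simp only [Prod.mk.injEq, mk_eq_Pb_I_iff, mk_eq_Pb_neg_I_iff]
    exact F15_fst_eq_zero_iff hu hv
  · have hk : k₁ * k₂ < 1 := by nlinarith [hk₁.1, hk₁.2, hk₂.1, hk₂.2]
    have hq : 1 + (k₁ : ℂ) * I * ((k₂ : ℂ) * I) ≠ 0 := by
      have : 1 + (k₁ : ℂ) * I * ((k₂ : ℂ) * I) = ((1 - k₁ * k₂ : ℝ) : ℂ) := by
        push_cast
        linear_combination (k₁ : ℂ) * k₂ * I_sq
      rw [this, ofReal_ne_zero]
      linarith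
    have hrel : ((k₁ : ℂ) * I) ^ 2 * ((k₂ : ℂ) * I) + 2 * ((k₁ : ℂ) * I) - (k₂ : ℂ) * I
        = -(((k₁ ^ 2 * k₂ - 2 * k₁ + k₂ : ℝ) : ℂ) * I) := by
      push_cast
      linear_combination (k₁ : ℂ) ^ 2 * k₂ * I * I_sq
    rw [F15_pt_one_eq_Pb_neg_iff _ _ hq, hrel, neg_eq_zero, mul_eq_zero, ofReal_eq_zero]
    simp [I_ne_zero]

/-- Let `k₁, k₂ ∈ (0,1)` with `k₁ ≠ k₂`, and let `φ` be the rational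
self-map of `ℙ¹(ℂ) × ℙ¹(ℂ)` given by `F15`. Then:
(i) `φ` is defined exactly away from `p = ([1:i],[1:i])` and `σ₀(p) = ([1:−i],[1:−i])`
(these are precisely the points where both `u₀v₀ + u₁v₁` and `u₁v₀ − u₀v₁` vanish, while the
second coordinate pair never vanishes);
(ii) `φ ∘ φ` is the identity at every point `([u₀:u₁],[v₀:v₁])` with `v₀² + v₁² ≠ 0` (the
image vector pair is a nonzero scalar multiple of the original one);
(iii) `φ` maps `q = ([1:k₁i],[1:k₂i])` to `σ₀(q) = ([1:−k₁i],[1:−k₂i])` if and only if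
`k₁²k₂ − 2k₁ + k₂ = 0`. -/
theorem statement15 (k₁ k₂ : ℝ)
    (hk₁ : k₁ ∈ Set.Ioo (0 : ℝ) 1) (hk₂ : k₂ ∈ Set.Ioo (0 : ℝ) 1) (hne : k₁ ≠ k₂) :
    -- (i)
    (∀ (u v : Fin 2 → ℂ) (hu : u ≠ 0) (hv : v ≠ 0),
      (F15 (u, v)).2 ≠ 0 ∧
      ((F15 (u, v)).1 = 0 ↔
        ((Projectivization.mk ℂ u hu, Projectivization.mk ℂ v hv)
            = (Pb Complex.I, Pb Complex.I) ∨
          (Projectivization.mk ℂ u hu, Projectivization.mk ℂ v hv)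
            = (Pb (-Complex.I), Pb (-Complex.I))))) ∧
    -- (ii)
    (∀ u v : Fin 2 → ℂ, u ≠ 0 → v ≠ 0 → v 0 ^ 2 + v 1 ^ 2 ≠ 0 →
      ∃ c : ℂ, c ≠ 0 ∧ F15 (F15 (u, v)) = (c • u, v)) ∧
    -- (iii)
    ((∃ (h1 : (F15 (![1, (k₁ : ℂ) * Complex.I], ![1, (k₂ : ℂ) * Complex.I])).1 ≠ 0)
        (h2 : (F15 (![1, (k₁ : ℂ) * Complex.I], ![1, (k₂ : ℂ) * Complex.I])).2 ≠ 0),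
        (Projectivization.mk ℂ
            (F15 (![1, (k₁ : ℂ) * Complex.I], ![1, (k₂ : ℂ) * Complex.I])).1 h1,
         Projectivization.mk ℂ
            (F15 (![1, (k₁ : ℂ) * Complex.I], ![1, (k₂ : ℂ) * Complex.I])).2 h2)
          = (Pb (-((k₁ : ℂ) * Complex.I)), Pb (-((k₂ : ℂ) * Complex.I))))
      ↔ k₁ ^ 2 * k₂ - 2 * k₁ + k₂ = 0) :=
  statement15_general k₁ k₂ hk₁ hk₂
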